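/- Let n ≥ 1 and N = 2n, let λ : Fin N → ℂ and Ω ∈ ℝ, and let W⁰ : Fin N → (Fin 2 →₀ ℕ) → ℂ, R⁰ : Fin 2 → (Fin 2 →₀ ℕ) → ℂ satisfy the tangency normalizations. Let W¹ : Fin N → (Fin 2 →₀ ℕ) → ℝ → ℂ and R¹ : Fin 2 → (Fin 2 →₀ ℕ) → ℝ → ℂ be families of functions of the phase φ ∈ ℝ, with each W¹ i k differentiable, and let F : Fin N → (Fin 2 →₀ ℕ) → ℝ → ℂ and H : Fin N → (Fin 2 →₀ ℕ) → ℝ → ℂ be given families. Fix i ∈ Fin N, a multi-index k, and φ ∈ ℝ. Then the k-th coefficient equation of row i of the order-ε invariance equation, namely λ i · W¹ i k φ + H i k φ + F i k φ = ∑_{j ∈ Fin 2} ∑_{(m,n) ∈ antidiagonal (k + e_j), m j > 0} (m j) · (W⁰ i m · R¹ j n φ + W¹ i m φ · R⁰ j n) + Ω · (deriv of W¹ i k at φ), holds if and only if (λ i − ∑_{j} (k j) · λ j) · W¹ i k φ − Ω · (deriv of W¹ i k at φ) = (if i < 2 then R¹ i k φ else 0) + P i k φ, where P i k φ := ∑_{j}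 ∑_{(m,n) ∈ antidiagonal (k + e_j), m j > 0, m ≠ e_j} (m j) · W⁰ i m · R¹ j n φ + ∑_{j} ∑_{(m,n) ∈ antidiagonal (k + e_j), m j > 0, m ≠ k} (m j) · W¹ i m φ · R⁰ j n − F i k φ − H i k φ. -/

import Mathlib

/-!
In each sum over `(m, n) ∈ antidiagonal (k + e_j)` with `m j > 0`, split off the term `m = e_j`
of the `W⁰ R¹` part and the term `m = k` of the `W¹ R⁰` part. By tangency the first is
`δ_ij R¹ j k`, the second is `k_j λ_j W¹ i k` (it is also present, with weight `0`, when
`k_j = 0`); the two sides of the equivalence are then linear rearrangements of each other.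
-/

open Finset

theorem Finset.sum_filter_antidiagonal_eq_ite_add_sum_filter_ne {A M : Type*}
    [AddMonoid A] [IsLeftCancelAdd A] [HasAntidiagonal A] [DecidableEq A] [AddCommMonoid M]
    (t s : A) (P : A × A → Prop) [DecidablePred P] (f : A × A → M) :
    ∑ p ∈ (HasAntidiagonal.antidiagonal (t + s)).filter P, f p
      = (if P (t, s) then f (t, s) else 0)
        + ∑ p ∈ (HasAntidiagonal.antidiagonal (t + s)).filter (fun p => P p ∧ p.1 ≠ t),
            f p := by
  have hfiber : (HasAntidiagonal.antidiagonal (t + s)).filter (fun p => P p ∧ p.1 = t)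
      = ({(t, s)} : Finset _).filter P := by
    ext ⟨a, b⟩
    simp only [mem_filter, HasAntidiagonal.mem_antidiagonal, mem_singleton, Prod.mk.injEq]
    constructor
    · rintro ⟨hab, hP, rfl⟩
      exact ⟨⟨rfl, add_left_cancel hab⟩, hP⟩
    · rintro ⟨⟨rfl, rfl⟩, hP⟩
      exact ⟨rfl, hP, rfl⟩
  rw [← sum_filter_add_sum_filter_not _ (fun p => p.1 = t), filter_filter, filter_filter, hfiber,
    sum_filter, sum_singleton]

theorem Finset.sum_filter_pos_antidiagonal_add_single {σ R : Type*} [DecidableEq σ]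
    [CommSemiring R] (k : σ →₀ ℕ) (j : σ) (a b c d : (σ →₀ ℕ) → R) :
    ∑ p ∈ (HasAntidiagonal.antidiagonal (k + Finsupp.single j 1)).filter
        (fun p : (σ →₀ ℕ) × (σ →₀ ℕ) => 0 < p.1 j),
        (p.1 j : R) * (a p.1 * b p.2 + c p.1 * d p.2)
      = a (Finsupp.single j 1) * b k + (k j : R) * c k * d (Finsupp.single j 1)
        + ∑ p ∈ (HasAntidiagonal.antidiagonal (k + Finsupp.single j 1)).filter
            (fun p : (σ →₀ ℕ) × (σ →₀ ℕ) => 0 < p.1 j ∧ p.1 ≠ Finsupp.single j 1),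
            (p.1 j : R) * a p.1 * b p.2
        + ∑ p ∈ (HasAntidiagonal.antidiagonal (k + Finsupp.single j 1)).filter
            (fun p : (σ →₀ ℕ) × (σ →₀ ℕ) => 0 < p.1 j ∧ p.1 ≠ k),
            (p.1 j : R) * c p.1 * d p.2 := by
  have hk := sum_filter_antidiagonal_eq_ite_add_sum_filter_ne k (Finsupp.single j 1)
    (fun p : (σ →₀ ℕ) × (σ →₀ ℕ) => 0 < p.1 j) (fun p => (p.1 j : R) * c p.1 * d p.2)
  have he := sum_filter_antidiagonal_eq_ite_add_sum_filter_ne (Finsupp.single j 1) k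
    (fun p : (σ →₀ ℕ) × (σ →₀ ℕ) => 0 < p.1 j) (fun p => (p.1 j : R) * a p.1 * b p.2)
  rw [add_comm (Finsupp.single j 1) k] at he
  have hkterm : (if 0 < k j then (k j : R) * c k * d (Finsupp.single j 1) else 0)
      = (k j : R) * c k * d (Finsupp.single j 1) := by
    split_ifs with hpos
    · rfl
    · simp [Nat.eq_zero_of_not_pos hpos]
  simp only [mul_add, ← mul_assoc, sum_add_distrib, hk, he, hkterm, Finsupp.single_eq_same,
    Nat.zero_lt_one, if_true, Nat.cast_one, one_mul]
  ring

theorem Fin.sum_ite_val_eq_mul_eq_dite {m N : ℕ} {R : Type*} [Semiring R] (i : Fin N)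
    (x : Fin m → R) :
    ∑ j : Fin m, (if (i : ℕ) = (j : ℕ) then 1 else 0) * x j
      = if h : (i : ℕ) < m then x ⟨i, h⟩ else 0 := by
  split_ifs with h
  · rw [Finset.sum_eq_single ⟨i, h⟩]
    · simp
    · intro j _ hj
      rw [if_neg (fun hij => hj (Fin.ext hij.symm)), zero_mul]
    · simp
  · refine Finset.sum_eq_zero fun j _ => ?_
    rw [if_neg (by omega), zero_mul]

/-- The `k`-th coefficient equation of row `i` of the order-`ε` (non-autonomous) invariance
equation for the SSM parameterization, with autonomous coefficients `W⁰, R⁰`, non-autonomous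
coefficients `W¹, R¹`, forcing coefficients `F` and nonlinearity-coupling coefficients `H`. -/
theorem nonautonomous_coefficient_equation
    (n : ℕ) (hn : 1 ≤ n) (N : ℕ) (hN : N = 2 * n)
    (lam : Fin N → ℂ) (Ω : ℝ)
    (W0 : Fin N → (Fin 2 →₀ ℕ) → ℂ)
    (R0 : Fin 2 → (Fin 2 →₀ ℕ) → ℂ)
    (W1 : Fin N → (Fin 2 →₀ ℕ) → ℝ → ℂ)
    (R1 : Fin 2 → (Fin 2 →₀ ℕ) → ℝ → ℂ)
    (F : Fin N → (Fin 2 →₀ ℕ) → ℝ → ℂ)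
    (H : Fin N → (Fin 2 →₀ ℕ) → ℝ → ℂ)
    (hW01 : ∀ i (j : Fin 2), W0 i (Finsupp.single j 1) = if (i : ℕ) = (j : ℕ) then 1 else 0)
    (hR01 : ∀ j l : Fin 2,
      R0 j (Finsupp.single l 1) = if j = l then lam (Fin.castLE (by omega) j) else 0)
    (i : Fin N) (k : Fin 2 →₀ ℕ) (φ : ℝ) :
    (lam i * W1 i k φ + H i k φ + F i k φ =
      (∑ j : Fin 2,
        ∑ p ∈ (Finset.HasAntidiagonal.antidiagonal (k + Finsupp.single j 1)).filter
            (fun p : (Fin 2 →₀ ℕ) × (Fin 2 →₀ ℕ) => 0 < p.1 j),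
          (p.1 j : ℂ) * (W0 i p.1 * R1 j p.2 φ + W1 i p.1 φ * R0 j p.2))
      + (Ω : ℂ) * deriv (W1 i k) φ)
    ↔
    ((lam i - ∑ j : Fin 2, (k j : ℂ) * lam (Fin.castLE (by omega) j)) * W1 i k φ
        - (Ω : ℂ) * deriv (W1 i k) φ =
      (if h : (i : ℕ) < 2 then R1 ⟨i, h⟩ k φ else 0) +
      ((∑ j : Fin 2,
          ∑ p ∈ (Finset.HasAntidiagonal.antidiagonal (k + Finsupp.single j 1)).filter
              (fun p : (Fin 2 →₀ ℕ) × (Fin 2 →₀ ℕ) => 0 < p.1 j ∧ p.1 ≠ Finsupp.single j 1),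
            (p.1 j : ℂ) * W0 i p.1 * R1 j p.2 φ)
       + (∑ j : Fin 2,
          ∑ p ∈ (Finset.HasAntidiagonal.antidiagonal (k + Finsupp.single j 1)).filter
              (fun p : (Fin 2 →₀ ℕ) × (Fin 2 →₀ ℕ) => 0 < p.1 j ∧ p.1 ≠ k),
            (p.1 j : ℂ) * W1 i p.1 φ * R0 j p.2)
       - F i k φ - H i k φ)) := by
  have hsplit := fun j : Fin 2 => sum_filter_pos_antidiagonal_add_single k j
    (W0 i) (fun m => R1 j m φ) (fun m => W1 i m φ) (R0 j)
  have hdiag : ∑ j : Fin 2, (k j : ℂ) * W1 i k φ * R0 j (Finsupp.single j 1)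
      = (∑ j : Fin 2, (k j : ℂ) * lam (Fin.castLE (by omega) j)) * W1 i k φ := by
    simp only [hR01, if_true, sum_mul]
    exact sum_congr rfl fun j _ => by ring
  simp only [hsplit, sum_add_distrib, hdiag, hW01, Fin.sum_ite_val_eq_mul_eq_dite]
  constructor <;> intro h <;> linear_combination h
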